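/- Let B be a finite sortable set of monomials in S = K[x_1,…,x_n] and let T = K[y_u : u ∈ B] be a polynomial ring with one variable y_u for each u ∈ B. Then there exists a monomial order < on T such that for every unsorted pair (u,v) ∈ B × B with sort(u,v) = (u',v'), the initial (leading) monomial of the binomial f_{u,v} = y_u y_v − y_{u'} y_{v'} with respect to < is y_u y_v. -/

import Mathlib

/-!
Monomials in `S = K[x_1, …, x_n]` are identified with multisets of (here, natural-number)
indices. -/

/-- Split a list into the sublist of entries in odd positions (1st, 3rd, 5th, …)
and the sublist of entries in even positions (2nd, 4th, …). -/
def altSplit {α : Type*} : List α → List α × List α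
  | [] => ([], [])
  | a :: l => (a :: (altSplit l).2, (altSplit l).1)

/-- The sorting `sort(u,v)` of a pair of monomials: write the product `u*v` as
`x_{i_1} x_{i_2} ⋯ x_{i_t}` with `i_1 ≤ i_2 ≤ ⋯ ≤ i_t`; then `u'` is the product of the
variables in odd positions and `v'` the product of those in even positions. -/
def sortPair {α : Type*} [LinearOrder α] (u v : Multiset α) : Multiset α × Multiset α :=
  (((altSplit ((u + v).sort (· ≤ ·))).1 : List α), ((altSplit ((u + v).sort (· ≤ ·))).2 : List α))

/-- A pair of monomials is sorted if `sort(u,v) = (u,v)`. -/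
def IsSortedPair {α : Type*} [LinearOrder α] (u v : Multiset α) : Prop :=
  sortPair u v = (u, v)

/-- A `q`-tuple of monomials is sorted if `(u_i, u_j)` is a sorted pair for all `i < j`. -/
def IsSortedTuple {α : Type*} [LinearOrder α] {q : ℕ} (u : Fin q → Multiset α) : Prop :=
  ∀ i j : Fin q, i < j → IsSortedPair (u i) (u j)

/-- A `q`-tuple of monomials is sorted of type `(d,r)` if it is sorted, its first `r` entries
have degree `d+1` and the remaining entries have degree `d`. -/
def IsSortedOfType {α : Type*} [LinearOrder α] {q : ℕ} (u : Fin q → Multiset α)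
    (d r : ℕ) : Prop :=
  IsSortedTuple u ∧ ∀ i : Fin q, Multiset.card (u i) = if (i : ℕ) < r then d + 1 else d
/-- A set `B` of monomials is sortable if `sort(u,v) ∈ B × B` for all `(u,v) ∈ B × B`. -/
def IsSortable {α : Type*} [LinearOrder α] (B : Finset (Multiset α)) : Prop :=
  ∀ u ∈ B, ∀ v ∈ B, (sortPair u v).1 ∈ B ∧ (sortPair u v).2 ∈ B

/-!
Weight a monomial `u` (a multiset of indices) by `∑_I (#(u ∩ I))²` over all intervals `I` of
the index set, and order the monomials of `T` by total weight first, breaking ties by any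
monomial order. Sorting `(u, v)` into `(u', v')` preserves `u + v`, hence every sum
`#(u ∩ I) + #(v ∩ I)`, and makes the two counts differ by at most one on each interval, so the
weight cannot go up. If `(u, v)` itself is balanced on every interval, then its prefix counts
never cross, which forces `sort(u, v)` to be `(u, v)` or `(v, u)`; otherwise some interval is
unbalanced by at least two and the weight of `y_{u'} y_{v'}` is strictly smaller than that of
`y_u y_v`.
-/

lemma sq_add_sq_le_of_balanced {a b c d : ℕ} (hsum : a + b = c + d) (hc : c ≤ d + 1)
    (hd : d ≤ c + 1) : c ^ 2 + d ^ 2 ≤ a ^ 2 + b ^ 2 := by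
  rcases le_total a b with h | h
  · obtain ⟨k, rfl⟩ := exists_add_of_le h; nlinarith
  · obtain ⟨k, rfl⟩ := exists_add_of_le h; nlinarith

lemma sq_add_sq_lt_of_balanced {a b c d : ℕ} (hsum : a + b = c + d) (hc : c ≤ d + 1)
    (hd : d ≤ c + 1) (hab : a + 2 ≤ b ∨ b + 2 ≤ a) : c ^ 2 + d ^ 2 < a ^ 2 + b ^ 2 := by
  rcases hab with h | h
  · obtain ⟨k, rfl⟩ := exists_add_of_le h; nlinarith
  · obtain ⟨k, rfl⟩ := exists_add_of_le h; nlinarith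

namespace Multiset

variable {α : Type*}

open Classical in
noncomputable def countIn (S : Set α) (u : Multiset α) : ℕ := u.countP (· ∈ S)

section Classical

open scoped Classical

variable {S T : Set α} {u v : Multiset α} {a : α}

lemma countIn_add : countIn S (u + v) = countIn S u + countIn S v := countP_add _ _ _

lemma countIn_cons_of_mem (ha : a ∈ S) : countIn S (a ::ₘ u) = countIn S u + 1 :=
  countP_cons_of_pos _ ha

lemma countIn_cons_of_notMem (ha : a ∉ S) : countIn S (a ::ₘ u) = countIn S u :=
  countP_cons_of_neg _ ha

lemma countIn_eq_zero (h : ∀ x ∈ u, x ∉ S) : countIn S u = 0 :=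
  countP_eq_zero.mpr h

lemma countIn_singleton [DecidableEq α] (x : α) (u : Multiset α) :
    countIn {x} u = u.count x := by
  simp only [countIn, count, Set.mem_singleton_iff, eq_comm]

end Classical

lemma countIn_sdiff_add {S T : Set α} {u : Multiset α} (hST : S ⊆ T) :
    countIn (T \ S) u + countIn S u = countIn T u := by
  induction u using Multiset.induction_on with
  | empty => rfl
  | cons x u ih =>
    by_cases hS : x ∈ S
    · rw [countIn_cons_of_notMem (fun h => h.2 hS), countIn_cons_of_mem hS,
        countIn_cons_of_mem (hST hS)]
      omega
    · by_cases hT : x ∈ T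
      · rw [countIn_cons_of_mem (show x ∈ T \ S from ⟨hT, hS⟩), countIn_cons_of_notMem hS,
          countIn_cons_of_mem hT]
        omega
      · rw [countIn_cons_of_notMem (fun h => hT h.1), countIn_cons_of_notMem hS,
          countIn_cons_of_notMem hT, ih]

variable [LinearOrder α]

lemma countIn_Iio_add_count (x : α) (u : Multiset α) :
    countIn (Set.Iio x) u + u.count x = countIn (Set.Iic x) u := by
  rw [← countIn_sdiff_add Set.Iio_subset_Iic_self, add_comm, Set.Iic_sdiff_Iio_same,
    countIn_singleton]

lemma eq_of_countIn_isLowerSet_eq {u v : Multiset α}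
    (h : ∀ L : Set α, IsLowerSet L → countIn L u = countIn L v) : u = v := by
  ext x
  have hu := countIn_Iio_add_count x u
  have hv := countIn_Iio_add_count x v
  rw [h _ (isLowerSet_Iio x), h _ (isLowerSet_Iic x)] at hu
  omega

end Multiset

section AltSplit

open Multiset

variable {α : Type*}

lemma altSplit_cons (a : α) (l : List α) :
    altSplit (a :: l) = (a :: (altSplit l).2, (altSplit l).1) := rfl

lemma altSplit_fst_add_snd (l : List α) :
    ((altSplit l).1 : Multiset α) + (altSplit l).2 = l := by
  induction l with
  | nil => rfl
  | cons a l ih => rw [altSplit_cons, ← cons_coe, cons_add, add_comm, ih, cons_coe]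

lemma countIn_altSplit_eq_zero {S : Set α} {l : List α} (h : ∀ x ∈ l, x ∉ S) :
    countIn S (altSplit l).1 = 0 ∧ countIn S (altSplit l).2 = 0 := by
  have := congrArg (countIn S) (altSplit_fst_add_snd l)
  rw [countIn_add, countIn_eq_zero fun x hx => h x (mem_coe.1 hx)] at this
  omega

variable [LinearOrder α] {S : Set α}

/-- In a sorted list the elements of an ord-connected set form one block; if that block starts
at the head, it alternates between the two parts starting with the first. -/
lemma countIn_altSplit_cons_of_mem (hS : S.OrdConnected) {a : α} {l : List α}
    (hl : (a :: l).Pairwise (· ≤ ·)) (ha : a ∈ S) :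
    countIn S (altSplit (a :: l)).2 ≤ countIn S (altSplit (a :: l)).1 ∧
      countIn S (altSplit (a :: l)).1 ≤ countIn S (altSplit (a :: l)).2 + 1 := by
  induction l generalizing a with
  | nil => exact ⟨Nat.zero_le _, (countIn_cons_of_mem (u := 0) ha).le⟩
  | cons b l ih =>
    have hab : a ≤ b := List.rel_of_pairwise_cons hl List.mem_cons_self
    have hbl := (List.pairwise_cons.1 hl).2
    simp only [altSplit_cons a (b :: l)]
    rw [← cons_coe, countIn_cons_of_mem ha]
    by_cases hb : b ∈ S
    · have := ih hbl hb
      omega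
    · have hout : ∀ x ∈ b :: l, x ∉ S := by
        rintro x hx hxS
        rcases List.mem_cons.1 hx with rfl | hx
        · exact hb hxS
        · exact hb (hS.out ha hxS ⟨hab, List.rel_of_pairwise_cons hbl hx⟩)
      have := countIn_altSplit_eq_zero hout
      omega

lemma countIn_altSplit_le (hS : S.OrdConnected) {l : List α} (hl : l.Pairwise (· ≤ ·)) :
    countIn S (altSplit l).1 ≤ countIn S (altSplit l).2 + 1 ∧
      countIn S (altSplit l).2 ≤ countIn S (altSplit l).1 + 1 := by
  induction l with
  | nil => exact ⟨Nat.zero_le _, Nat.zero_le _⟩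
  | cons a l ih =>
    by_cases ha : a ∈ S
    · have := countIn_altSplit_cons_of_mem hS hl ha
      omega
    · simp only [altSplit_cons a l]
      rw [← cons_coe, countIn_cons_of_notMem ha]
      have := ih (List.pairwise_cons.1 hl).2
      omega

lemma countIn_altSplit_of_isLowerSet (hS : IsLowerSet S) {l : List α}
    (hl : l.Pairwise (· ≤ ·)) :
    countIn S (altSplit l).2 ≤ countIn S (altSplit l).1 ∧
      countIn S (altSplit l).1 ≤ countIn S (altSplit l).2 + 1 := by
  cases l with
  | nil => exact ⟨Nat.zero_le _, Nat.zero_le _⟩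
  | cons a l =>
    by_cases ha : a ∈ S
    · exact countIn_altSplit_cons_of_mem hS.ordConnected hl ha
    · have hout : ∀ x ∈ a :: l, x ∉ S := by
        rintro x hx hxS
        rcases List.mem_cons.1 hx with rfl | hx
        · exact ha hxS
        · exact ha (hS (List.rel_of_pairwise_cons hl hx) hxS)
      have := countIn_altSplit_eq_zero hout
      omega

end AltSplit

section Sorting

open Multiset

variable {α : Type*} [LinearOrder α] {u v : Multiset α}

def IsBalanced (u v : Multiset α) : Prop :=
  ∀ S : Set α, S.OrdConnected → countIn S u ≤ countIn S v + 1 ∧ countIn S v ≤ countIn S u + 1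

lemma IsBalanced.symm (h : IsBalanced u v) : IsBalanced v u :=
  fun S hS => (h S hS).symm

lemma sortPair_comm (u v : Multiset α) : sortPair u v = sortPair v u := by
  unfold sortPair
  rw [add_comm]

lemma sortPair_fst_add_snd (u v : Multiset α) :
    (sortPair u v).1 + (sortPair u v).2 = u + v := by
  rw [sortPair, altSplit_fst_add_snd, sort_eq]

lemma isBalanced_sortPair (u v : Multiset α) : IsBalanced (sortPair u v).1 (sortPair u v).2 :=
  fun _ hS => countIn_altSplit_le hS (pairwise_sort _ _)

lemma countIn_sortPair_of_isLowerSet {L : Set α} (hL : IsLowerSet L) (u v : Multiset α) :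
    countIn L (sortPair u v).2 ≤ countIn L (sortPair u v).1 ∧
      countIn L (sortPair u v).1 ≤ countIn L (sortPair u v).2 + 1 :=
  countIn_altSplit_of_isLowerSet hL (pairwise_sort _ _)

/-- Lower sets of a linear order form a chain, and the difference of two nested ones is
ord-connected, so a sign change of `countIn L u - countIn L v` would unbalance it by `2`. -/
lemma IsBalanced.countIn_le_or_countIn_ge (h : IsBalanced u v) :
    (∀ L : Set α, IsLowerSet L → countIn L v ≤ countIn L u) ∨
      ∀ L : Set α, IsLowerSet L → countIn L u ≤ countIn L v := by
  by_contra! hcross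
  obtain ⟨⟨L₁, hL₁, h₁⟩, ⟨L₂, hL₂, h₂⟩⟩ := hcross
  have hsdiff {L L' : Set α} (hL : IsLowerSet L) (hL' : IsLowerSet L') :
      (L' \ L).OrdConnected := by
    rw [Set.sdiff_eq]
    exact hL'.ordConnected.inter hL.compl.ordConnected
  have := h _ hL₁.ordConnected
  have := h _ hL₂.ordConnected
  rcases hL₁.total hL₂ with h12 | h21
  · have := h _ (hsdiff hL₁ hL₂)
    have := countIn_sdiff_add (u := u) h12
    have := countIn_sdiff_add (u := v) h12
    omega
  · have := h _ (hsdiff hL₂ hL₁)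
    have := countIn_sdiff_add (u := u) h21
    have := countIn_sdiff_add (u := v) h21
    omega

lemma IsBalanced.sortPair_eq_of_countIn_le (h : IsBalanced u v)
    (hle : ∀ L : Set α, IsLowerSet L → countIn L v ≤ countIn L u) : sortPair u v = (u, v) := by
  have hsum (L : Set α) := congrArg (countIn L) (sortPair_fst_add_snd u v)
  simp only [countIn_add] at hsum
  refine Prod.ext ?_ ?_ <;> refine eq_of_countIn_isLowerSet_eq fun L hL => ?_ <;>
  · have := hsum L
    have := countIn_sortPair_of_isLowerSet hL u v
    have := hle L hL
    have := h L hL.ordConnected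
    dsimp only
    omega

lemma IsBalanced.sortPair_eq (h : IsBalanced u v) :
    sortPair u v = (u, v) ∨ sortPair u v = (v, u) := by
  rcases h.countIn_le_or_countIn_ge with hle | hle
  · exact .inl (h.sortPair_eq_of_countIn_le hle)
  · exact .inr (sortPair_comm u v ▸ h.symm.sortPair_eq_of_countIn_le hle)

open Classical in
noncomputable def sortingWeight [Fintype α] (u : Multiset α) : ℕ :=
  ∑ S : {S : Set α // S.OrdConnected}, countIn S u ^ 2

lemma sortingWeight_sortPair_lt [Fintype α] (h₁ : sortPair u v ≠ (u, v))
    (h₂ : sortPair u v ≠ (v, u)) :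
    sortingWeight (sortPair u v).1 + sortingWeight (sortPair u v).2 <
      sortingWeight u + sortingWeight v := by
  classical
  have hunbalanced : ¬ IsBalanced u v := fun h => h.sortPair_eq.elim h₁ h₂
  simp only [IsBalanced, not_forall] at hunbalanced
  obtain ⟨S, hS, hS_unbalanced⟩ := hunbalanced
  have hsum (T : Set α) := congrArg (countIn T) (sortPair_fst_add_snd u v)
  simp only [countIn_add] at hsum
  simp only [sortingWeight, ← Finset.sum_add_distrib]
  refine Finset.sum_lt_sum (fun T _ => ?_) ⟨⟨S, hS⟩, Finset.mem_univ _, ?_⟩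
  · have := isBalanced_sortPair u v T T.2
    exact sq_add_sq_le_of_balanced (hsum T).symm this.1 this.2
  · have := isBalanced_sortPair u v S hS
    dsimp only
    exact sq_add_sq_lt_of_balanced (hsum S).symm this.1 this.2 (by omega)

end Sorting

universe u v w

instance {α : Type*} [AddCommMonoid α] [PartialOrder α] [IsOrderedAddMonoid α] :
    IsOrderedAddMonoid (ULift.{w} α) where
  add_le_add_left _ _ h c := add_le_add_left (α := α) h c.down

namespace MonomialOrder

variable {σ : Type u}

noncomputable def ulift (m : MonomialOrder.{u, v} σ) : MonomialOrder.{u, max v w} σ where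
  syn := ULift.{w} m.syn
  toSyn := m.toSyn.trans AddEquiv.ulift.symm
  toSyn_monotone _ _ h := m.toSyn_monotone h

/-- The lift lets the synonym type live in any universe, not only that of `σ`. -/
lemma nonempty_of_finite [Finite σ] : Nonempty (MonomialOrder.{u, max u w} σ) :=
  letI : LinearOrder σ := LinearOrder.lift' (Finite.equivFin σ) (Equiv.injective _)
  ⟨lex.ulift⟩

variable (m : MonomialOrder σ) (ω : (σ →₀ ℕ) →+ ℕ)

noncomputable def weightedEmbedding : (σ →₀ ℕ) →+ ℕ ×ₗ m.syn where
  toFun a := toLex (ω a, m.toSyn a)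
  map_zero' := by simp
  map_add' _ _ := by simp; rfl

/-- The monomial order comparing by the weight `ω` first and by `m` second. -/
noncomputable def weighted : MonomialOrder σ where
  syn := AddMonoidHom.mrange (m.weightedEmbedding ω)
  toSyn := AddEquiv.ofLeftInverse' (m.weightedEmbedding ω)
    (g := fun p => m.toSyn.symm (ofLex p).2) fun a => m.toSyn.symm_apply_apply a
  toSyn_monotone a b hab := by
    obtain ⟨c, rfl⟩ := exists_add_of_le hab
    exact Prod.Lex.toLex_mono ⟨by simp, m.toSyn_monotone hab⟩

lemma weighted_toSyn_lt_of_lt {a b : σ →₀ ℕ} (h : ω a < ω b) :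
    (m.weighted ω).toSyn a < (m.weighted ω).toSyn b :=
  Prod.Lex.toLex_lt_toLex.mpr (.inl h)

end MonomialOrder

theorem exists_sorting_order_general (n : ℕ) (B : Finset (Multiset (Fin n))) :
    ∃ mo : MonomialOrder ↥B,
      ∀ u v u' v' : ↥B,
        ¬ IsSortedPair (u : Multiset (Fin n)) (v : Multiset (Fin n)) →
        sortPair (u : Multiset (Fin n)) (v : Multiset (Fin n)) =
          ((u' : Multiset (Fin n)), (v' : Multiset (Fin n))) →
        mo.toSyn (Finsupp.single u' 1 + Finsupp.single v' 1) ≤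
          mo.toSyn (Finsupp.single u 1 + Finsupp.single v 1) := by
  obtain ⟨m⟩ := MonomialOrder.nonempty_of_finite (σ := ↥B)
  refine ⟨m.weighted (Finsupp.weight fun b : ↥B => sortingWeight (b : Multiset (Fin n))), ?_⟩
  intro u v u' v' hunsorted hsort
  by_cases hswap : u' = v ∧ v' = u
  · rw [hswap.1, hswap.2, add_comm]
  · have hnotswap :
        sortPair (u : Multiset (Fin n)) v ≠ ((v : Multiset (Fin n)), (u : Multiset (Fin n))) := by
      rw [hsort, Ne, Prod.mk.injEq]
      exact fun h => hswap ⟨Subtype.ext h.1, Subtype.ext h.2⟩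
    refine (MonomialOrder.weighted_toSyn_lt_of_lt _ _ ?_).le
    simpa [Finsupp.weight_single, hsort] using sortingWeight_sortPair_lt hunsorted hnotswap

/-- for a finite sortable set `B` of monomials in `K[x_1,…,x_n]` there is a
monomial order on `T = K[y_u : u ∈ B]` (the "sorting order") such that for every unsorted pair
`(u,v) ∈ B × B` with `sort(u,v) = (u',v')`, the initial monomial of the binomial
`f_{u,v} = y_u y_v − y_{u'} y_{v'}` is `y_u y_v`, i.e. `y_{u'} y_{v'} ≼ y_u y_v`. -/
theorem exists_sorting_order (n : ℕ) (B : Finset (Multiset (Fin n)))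
    (hB : IsSortable B) :
    ∃ mo : MonomialOrder ↥B,
      ∀ u v u' v' : ↥B,
        ¬ IsSortedPair (u : Multiset (Fin n)) (v : Multiset (Fin n)) →
        sortPair (u : Multiset (Fin n)) (v : Multiset (Fin n)) =
          ((u' : Multiset (Fin n)), (v' : Multiset (Fin n))) →
        mo.toSyn (Finsupp.single u' 1 + Finsupp.single v' 1) ≤
          mo.toSyn (Finsupp.single u 1 + Finsupp.single v 1) :=
  exists_sorting_order_general n B
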